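/- arXiv:1506.08382 — 2 statements merged into one kernel-verified Lean document; each statement's English description precedes it below -/
import Mathlib

section
/- For any positive integers n, p, and q, ∑_{j_1+⋯+j_p=n} (n choose j_1,…,j_p) ∏_{t=1}^p q·(j_t p + q)^{j_t - 1} = ∑_{i_1+⋯+i_q=n} (n choose i_1,…,i_q) p^n ∏_{t=1}^q (i_t + 1)^{i_t - 1}, where the first sum ranges over all p-tuples of nonnegative integers summing to n, the second sum ranges over all q-tuples of nonnegative integers summing to n, (n choose a_1,…,a_r) denotes the multinomial coefficient, and each factor of the form x^{a-1} with a = 0 is interpreted as x^{-1} (equivalently, q·(0·p+q)^{-1} = 1 and (0+1)^{-1} = 1). -/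
/-!
With the Abel polynomials `A₀ = 1`, `Aₖ(x) = x (x + k)^(k-1)`, the `t`-th factor on the left is
`p^(jₜ) Aⱼₜ(q/p)` and the one on the right is `Aᵢₜ(1)`. Abel's binomial identity
`∑ C(n,k) Aₖ(x) Aₙ₋ₖ(y) = Aₙ(x + y)` follows by induction on `n`: both sides agree at `x = 0`,
and since `d/dx Aₙ₊₁(x) = (n+1) Aₙ(x+1)`, the induction hypothesis at `x + 1` shows they have the
same derivative in `x`. Iterating it over `r` factors gives `∑ multinomial(i) ∏ Aᵢₜ(x) = Aₙ(r x)`,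
so both sides equal `p^n Aₙ(q)`.
-/

open Finset

noncomputable def abelPoly : ℕ → ℝ → ℝ
  | 0, _ => 1
  | k + 1, x => x * (x + k + 1) ^ k

@[simp] lemma abelPoly_zero (x : ℝ) : abelPoly 0 x = 1 := rfl

lemma abelPoly_succ (k : ℕ) (x : ℝ) : abelPoly (k + 1) x = x * (x + k + 1) ^ k := rfl

@[simp] lemma abelPoly_succ_apply_zero (k : ℕ) : abelPoly (k + 1) 0 = 0 := by
  simp [abelPoly_succ]

lemma hasDerivAt_abelPoly_succ (k : ℕ) (x : ℝ) :
    HasDerivAt (abelPoly (k + 1)) ((k + 1) * abelPoly k (x + 1)) x := by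
  have h : HasDerivAt (fun z : ℝ ↦ z * (z + k + 1) ^ k)
      (1 * (x + k + 1) ^ k + x * (k * (x + k + 1) ^ (k - 1) * 1)) x :=
    (hasDerivAt_id' x).fun_mul ((((hasDerivAt_id' x).add_const _).add_const _).fun_pow k)
  refine h.congr_deriv ?_
  cases k with
  | zero => simp
  | succ m =>
    simp only [abelPoly_succ, Nat.add_sub_cancel]
    push_cast
    ring

theorem sum_antidiagonal_choose_mul_abelPoly (n : ℕ) (x y : ℝ) :
    ∑ ij ∈ antidiagonal n, (n.choose ij.1 : ℝ) * abelPoly ij.1 x * abelPoly ij.2 y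
      = abelPoly n (x + y) := by
  induction n generalizing x with
  | zero => simp
  | succ n ih =>
    set F : ℝ → ℝ := fun x ↦ ∑ ij ∈ antidiagonal n,
      ((n + 1).choose (ij.1 + 1) : ℝ) * abelPoly (ij.1 + 1) x * abelPoly ij.2 y
    have hsplit : ∀ x, ∑ ij ∈ antidiagonal (n + 1),
        ((n + 1).choose ij.1 : ℝ) * abelPoly ij.1 x * abelPoly ij.2 y = abelPoly (n + 1) y + F x := by
      intro x
      simp [F, Nat.sum_antidiagonal_succ]
    have hF : ∀ x, HasDerivAt (fun x ↦ abelPoly (n + 1) y + F x)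
        ((n + 1) * abelPoly n (x + y + 1)) x := by
      intro x
      have h := HasDerivAt.fun_sum (u := antidiagonal n) fun ij _ ↦
        ((hasDerivAt_abelPoly_succ ij.1 x).const_mul ((n + 1).choose (ij.1 + 1) : ℝ)).mul_const
          (abelPoly ij.2 y)
      refine (h.const_add (abelPoly (n + 1) y)).congr_deriv ?_
      rw [show x + y + 1 = (x + 1) + y by ring, ← ih, mul_sum]
      refine sum_congr rfl fun ij _ ↦ ?_
      have hchoose := congrArg (Nat.cast (R := ℝ)) (Nat.add_one_mul_choose_eq n ij.1)
      push_cast at hchoose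
      linear_combination -(abelPoly ij.1 (x + 1) * abelPoly ij.2 y) * hchoose
    have hg : ∀ x, HasDerivAt (fun x ↦ abelPoly (n + 1) (x + y))
        ((n + 1) * abelPoly n (x + y + 1)) x := fun x ↦
      (hasDerivAt_abelPoly_succ n (x + y)).comp_add_const x y
    have hfg := eq_of_fderiv_eq (fun x ↦ (hF x).differentiableAt) (fun x ↦ (hg x).differentiableAt)
      (fun x ↦ (hF x).hasFDerivAt.fderiv.trans (hg x).hasFDerivAt.fderiv.symm) 0 (by simp [F])
    rw [hsplit]
    exact congrFun hfg x

theorem sum_piAntidiag_multinomial_mul_prod_abelPoly {ι : Type*} [DecidableEq ι] (s : Finset ι)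
    (n : ℕ) (x : ℝ) :
    ∑ f ∈ s.piAntidiag n, (Nat.multinomial s f : ℝ) * ∏ i ∈ s, abelPoly (f i) x
      = abelPoly n (#s * x) := by
  induction s using Finset.cons_induction generalizing n with
  | empty => cases n <;> simp
  | cons i s hi ih =>
    rw [piAntidiag_cons, sum_disjiUnion, card_cons, Nat.cast_succ, add_one_mul, add_comm,
      ← sum_antidiagonal_choose_mul_abelPoly]
    refine sum_congr rfl fun ab hab ↦ ?_
    rw [HasAntidiagonal.mem_antidiagonal] at hab
    rw [sum_map, ← ih, mul_sum]
    refine sum_congr rfl fun f hf ↦ ?_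
    rw [mem_piAntidiag] at hf
    have hfi : f i = 0 := by_contra fun h ↦ hi (hf.2 i h)
    have hs : ∀ t ∈ s, (f + fun t ↦ if t = i then ab.1 else 0) t = f t := fun t ht ↦ by
      simp [ne_of_mem_of_not_mem ht hi]
    simp only [addRightEmbedding_apply, Nat.multinomial_cons, prod_cons, Nat.multinomial_congr hs,
      prod_congr rfl fun t ht ↦ congrArg (abelPoly · x) (hs t ht), sum_congr rfl hs, hf.1]
    simp [hfi, hab]
    ring

lemma pow_mul_abelPoly_div (k : ℕ) {c x : ℝ} (hc : c ≠ 0) (hx : x ≠ 0) :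
    c ^ k * abelPoly k (x / c) = x * (k * c + x) ^ ((k : ℤ) - 1) := by
  cases k with
  | zero => simp [hx]
  | succ m =>
    rw [abelPoly_succ, show ((m + 1 : ℕ) : ℤ) - 1 = m by push_cast; ring, zpow_natCast,
      show x / c + m + 1 = ((m + 1 : ℕ) * c + x) / c by field_simp; push_cast; ring, div_pow]
    field_simp
    ring

theorem multinomial_pq_identity_general (n p q : ℕ) (hp : 0 < p) (hq : 0 < q) :
    ∑ j ∈ Finset.Nat.antidiagonalTuple p n,
      (Nat.multinomial Finset.univ j : ℝ) *
        ∏ t, (q : ℝ) * ((j t : ℝ) * p + q) ^ ((j t : ℤ) - 1)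
      = ∑ i ∈ Finset.Nat.antidiagonalTuple q n,
        (Nat.multinomial Finset.univ i : ℝ) * (p : ℝ) ^ n *
          ∏ t, ((i t : ℝ) + 1) ^ ((i t : ℤ) - 1) := by
  have hp' : (p : ℝ) ≠ 0 := by positivity
  have hq' : (q : ℝ) ≠ 0 := by positivity
  have hL : ∀ j ∈ Nat.antidiagonalTuple p n,
      (Nat.multinomial univ j : ℝ) * ∏ t, (q : ℝ) * ((j t : ℝ) * p + q) ^ ((j t : ℤ) - 1)
        = p ^ n * ((Nat.multinomial univ j : ℝ) * ∏ t, abelPoly (j t) (q / p)) := by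
    intro j hj
    simp_rw [← pow_mul_abelPoly_div _ hp' hq', prod_mul_distrib, prod_pow_eq_pow_sum,
      Nat.mem_antidiagonalTuple.mp hj]
    ring
  have hR : ∀ i ∈ Nat.antidiagonalTuple q n,
      (Nat.multinomial univ i : ℝ) * p ^ n * ∏ t, ((i t : ℝ) + 1) ^ ((i t : ℤ) - 1)
        = p ^ n * ((Nat.multinomial univ i : ℝ) * ∏ t, abelPoly (i t) 1) := by
    intro i _
    have h (k : ℕ) : ((k : ℝ) + 1) ^ ((k : ℤ) - 1) = abelPoly k 1 := by
      simpa [add_comm] using (pow_mul_abelPoly_div k one_ne_zero one_ne_zero).symm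
    simp_rw [h]
    ring
  rw [sum_congr rfl hL, sum_congr rfl hR, ← mul_sum, ← mul_sum,
    ← piAntidiag_univ_fin_eq_antidiagonalTuple, ← piAntidiag_univ_fin_eq_antidiagonalTuple,
    sum_piAntidiag_multinomial_mul_prod_abelPoly, sum_piAntidiag_multinomial_mul_prod_abelPoly]
  simp only [card_univ, Fintype.card_fin, mul_div_cancel₀ _ hp', mul_one]

theorem multinomial_pq_identity (n p q : ℕ) (hn : 0 < n) (hp : 0 < p) (hq : 0 < q) :
    ∑ j ∈ Finset.Nat.antidiagonalTuple p n,
      (Nat.multinomial Finset.univ j : ℝ) *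
        ∏ t, (q : ℝ) * ((j t : ℝ) * p + q) ^ ((j t : ℤ) - 1)
      = ∑ i ∈ Finset.Nat.antidiagonalTuple q n,
        (Nat.multinomial Finset.univ i : ℝ) * (p : ℝ) ^ n *
          ∏ t, ((i t : ℝ) + 1) ^ ((i t : ℤ) - 1) :=
  multinomial_pq_identity_general n p q hp hq
end

section
/- For every positive integer m and every positive real number c, f(m,c) satisfies the functional equation f(m,c) = e^{-c(1 - f(m,c)^m)/m}; equivalently, f(m,c)^m = e^{-c(1 - f(m,c)^m)}. -/
/-- `f m c = ∑_{k=0}^∞ (km+1)^{k-1} c^k e^{-c(km+1)/m} / (m^k k!)`, where the factor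
`(km+1)^{k-1}` for `k = 0` is interpreted as `1` (here via `ℕ`-subtraction in the exponent,
which gives `(0·m+1)^0 = 1`). -/
noncomputable def f (m c : ℝ) : ℝ :=
  ∑' k : ℕ, ((k : ℝ) * m + 1) ^ (k - 1) * c ^ k *
    Real.exp (-c * ((k : ℝ) * m + 1) / m) / (m ^ k * (Nat.factorial k : ℝ))

/-!
Put `μ = m`, `t = c / m` and `z = t e^{-c}`, and let `S x = ∑ₖ A(x, k) zᵏ / k!` with the Abel
coefficients `A(x, k) = x (x + kμ)^(k-1)`, so that `f = e^{-t} S 1`. Abel's identity gives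
Hurwitz's convolution `∑ C(n,k) A(x,k) A(y,n-k) = A(x+y,n)`, hence `S (x + y) = S x * S y` and
`S (n x) = (S x)ⁿ`. Expanding `exp (x z S μ) = ∑ⱼ (x z)ʲ S (jμ) / j!` as a double series and
regrouping by total degree gives `exp (x z S μ) = S x` by one more binomial identity. For `x = 1`
this is `exp (t fᵐ) = eᵗ f`, the functional equation. All series involved converge for
`0 ≤ μ z ≤ e⁻¹` by Stirling's formula, and `μ z = c e^{-c} ≤ e⁻¹`.
-/

open Finset Real Nat

theorem sum_neg_one_pow_mul_choose_mul_pow_eq_zero {R : Type*} [CommRing R] {j n : ℕ}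
    (h : j < n) (a b : R) :
    ∑ k ∈ range (n + 1), (-1 : R) ^ (n - k) * n.choose k * (a + b * k) ^ j = 0 := by
  open Polynomial in
  have hdeg : ((C b * X + C a) ^ j).natDegree < n :=
    (natDegree_pow_le_of_le j natDegree_linear_le).trans_lt (by simpa using h)
  have hdiff := congr_fun (fwdDiff_iter_eq_zero_of_degree_lt hdeg) 0
  rw [fwdDiff_iter_eq_sum_shift] at hdiff
  simp only [nsmul_eq_mul, mul_one, zero_add, eval_pow, eval_add, eval_mul, eval_C, eval_X,
    zsmul_eq_mul, Int.cast_mul, Int.cast_pow, Int.cast_neg, Int.cast_one, Int.cast_natCast,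
    Pi.zero_apply] at hdiff
  rw [← hdiff]
  exact sum_congr rfl fun k _ => by ring

theorem sum_choose_succ_mul_sub_mul {R : Type*} [CommSemiring R] (n : ℕ) (a : ℕ → R) :
    ∑ k ∈ range (n + 2), ((n + 1).choose k : R) * (((n + 1 - k : ℕ) : R) * a k)
      = (n + 1) * ∑ k ∈ range (n + 1), (n.choose k : R) * a k := by
  rw [sum_range_succ, Nat.sub_self, Nat.cast_zero, zero_mul, mul_zero, add_zero, mul_sum]
  refine sum_congr rfl fun k _ => ?_
  rw [← mul_assoc, ← mul_assoc]
  congr 1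
  simpa [mul_comm] using congrArg (Nat.cast : ℕ → R) (Nat.choose_mul_succ_eq n k).symm

noncomputable def abelCoeff (μ x : ℝ) : ℕ → ℝ
  | 0 => 1
  | k + 1 => x * (x + μ * (k + 1)) ^ k

theorem abelCoeff_mul_pow (μ x : ℝ) {k n : ℕ} (hk : k ≤ n + 1) :
    abelCoeff μ x k * (x + μ * k) ^ (n + 1 - k) = x * (x + μ * k) ^ n := by
  cases k with
  | zero => simpa [abelCoeff] using pow_succ' x n
  | succ k =>
    rw [abelCoeff]
    push_cast
    rw [mul_assoc, ← pow_add]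
    congr 2
    omega

theorem abelCoeff_eq_sub (μ x : ℝ) (k : ℕ) :
    abelCoeff μ x k = (x + μ * k) ^ k - μ * k * (x + μ * k) ^ (k - 1) := by
  cases k with
  | zero => simp [abelCoeff]
  | succ k => simp only [abelCoeff, Nat.add_sub_cancel, pow_succ]; push_cast; ring

noncomputable def abelSum (μ x y : ℝ) (n : ℕ) : ℝ :=
  ∑ k ∈ range (n + 1), (n.choose k : ℝ) * abelCoeff μ x k * (y + μ * (n - k : ℕ)) ^ (n - k)

theorem sum_choose_mul_abelCoeff_mul_sub_mul_pow (μ x y : ℝ) (n : ℕ) :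
    ∑ k ∈ range (n + 2), ((n + 1).choose k : ℝ) * abelCoeff μ x k *
      (((n + 1 - k : ℕ) : ℝ) * (y + μ * (n + 1 - k : ℕ)) ^ (n - k))
      = (n + 1) * abelSum μ x (y + μ) n := by
  refine (sum_congr rfl fun k hk => ?_).trans ((sum_choose_succ_mul_sub_mul n
    fun k => abelCoeff μ x k * (y + μ + μ * (n - k : ℕ)) ^ (n - k)).trans ?_)
  · rcases Nat.lt_or_ge n k with hnk | hkn
    · obtain rfl : k = n + 1 := by have := mem_range.1 hk; omega
      simp
    · rw [Nat.succ_sub hkn]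
      push_cast
      ring
  · simp only [abelSum, mul_assoc]

theorem hasDerivAt_abelSum (μ x y : ℝ) (n : ℕ) :
    HasDerivAt (fun y => abelSum μ x y (n + 1)) ((n + 1) * abelSum μ x (y + μ) n) y := by
  rw [← sum_choose_mul_abelCoeff_mul_sub_mul_pow]
  unfold abelSum
  refine HasDerivAt.fun_sum fun k _ => ?_
  refine ((((hasDerivAt_id' y).add_const _).pow (n + 1 - k)).const_mul
    (((n + 1).choose k : ℝ) * abelCoeff μ x k)).congr_deriv ?_
  rw [mul_one, Nat.sub_right_comm, Nat.add_sub_cancel]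

-- Each term is `± x (x + kμ)ⁿ`: the sum is an `(n + 1)`-st finite difference of a polynomial of
-- degree `n`.
theorem abelSum_succ_neg_eq_zero (μ x : ℝ) (n : ℕ) :
    abelSum μ x (-x - μ * (n + 1)) (n + 1) = 0 := by
  have hterm : ∀ k ∈ range (n + 2), ((n + 1).choose k : ℝ) * abelCoeff μ x k *
      (-x - μ * (n + 1) + μ * (n + 1 - k : ℕ)) ^ (n + 1 - k)
      = x * ((-1) ^ (n + 1 - k) * (n + 1).choose k * (x + μ * k) ^ n) := by
    intro k hk
    have hk : k ≤ n + 1 := Nat.lt_succ_iff.1 (mem_range.1 hk)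
    rw [Nat.cast_sub hk, show -x - μ * (n + 1) + μ * ((n + 1 : ℕ) - k : ℝ) = -(x + μ * k) by
      push_cast; ring, neg_pow]
    linear_combination ((n + 1).choose k * (-1) ^ (n + 1 - k) : ℝ) * abelCoeff_mul_pow μ x hk
  rw [abelSum, sum_congr rfl hterm, ← mul_sum,
    sum_neg_one_pow_mul_choose_mul_pow_eq_zero (Nat.lt_succ_self n), mul_zero]

-- Abel's identity. Both sides have derivative `(n + 1) (x + y + μ (n + 1))ⁿ` in `y` and vanish at
-- `y = -x - μ (n + 1)`.
theorem abelSum_eq_pow (μ x y : ℝ) (n : ℕ) : abelSum μ x y n = (x + y + μ * n) ^ n := by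
  induction n generalizing y with
  | zero => simp [abelSum, abelCoeff]
  | succ n ih =>
    have hpow : ∀ y, HasDerivAt (fun y => (x + y + μ * (n + 1 : ℕ)) ^ (n + 1))
        ((n + 1) * abelSum μ x (y + μ) n) y := fun y => by
      refine ((((hasDerivAt_id' y).const_add x).add_const _).pow (n + 1)).congr_deriv ?_
      rw [ih]; push_cast; ring
    have hderiv : ∀ y, HasDerivAt
        (fun y => abelSum μ x y (n + 1) - (x + y + μ * (n + 1 : ℕ)) ^ (n + 1)) 0 y := fun y =>
      ((hasDerivAt_abelSum μ x y n).fun_sub (hpow y)).congr_deriv (sub_self _)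
    have hconst := is_const_of_deriv_eq_zero (fun y => (hderiv y).differentiableAt)
      (fun y => (hderiv y).deriv) y (-x - μ * (n + 1))
    rw [abelSum_succ_neg_eq_zero] at hconst
    push_cast at hconst ⊢
    linear_combination hconst

-- Hurwitz's identity: `abelCoeff_eq_sub` splits it into two instances of Abel's identity.
theorem sum_choose_mul_abelCoeff_mul_abelCoeff (μ x y : ℝ) (n : ℕ) :
    ∑ k ∈ range (n + 1), (n.choose k : ℝ) * abelCoeff μ x k * abelCoeff μ y (n - k)
      = abelCoeff μ (x + y) n := by
  cases n with
  | zero => simp [abelCoeff]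
  | succ n =>
    have hterm : ∀ k ∈ range (n + 2), ((n + 1).choose k : ℝ) * abelCoeff μ x k *
        abelCoeff μ y (n + 1 - k) = (n + 1).choose k * abelCoeff μ x k *
          (y + μ * (n + 1 - k : ℕ)) ^ (n + 1 - k) - μ * (((n + 1).choose k : ℝ) *
          abelCoeff μ x k * (((n + 1 - k : ℕ) : ℝ) * (y + μ * (n + 1 - k : ℕ)) ^ (n - k))) := by
      intro k _
      rw [abelCoeff_eq_sub μ y, Nat.sub_right_comm, Nat.add_sub_cancel]
      ring
    rw [sum_congr rfl hterm, sum_sub_distrib, ← mul_sum,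
      sum_choose_mul_abelCoeff_mul_sub_mul_pow]
    change abelSum μ x y (n + 1) - _ = _
    rw [abelSum_eq_pow, abelSum_eq_pow, abelCoeff]
    push_cast
    ring

theorem choose_succ_mul_abelCoeff {μ : ℝ} {j n : ℕ} (hj : j ≤ n) :
    ((n + 1).choose (j + 1) : ℝ) * abelCoeff μ ((j + 1) * μ) (n - j)
      = n.choose j * (μ * (n + 1)) ^ (n - j) := by
  obtain ⟨i, rfl⟩ := Nat.exists_eq_add_of_le hj
  rw [Nat.add_sub_cancel_left]
  cases i with
  | zero => simp [abelCoeff]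
  | succ i =>
    have h : ((j + i + 2 : ℕ) : ℝ) * (j + i + 1).choose j
        = (j + i + 2).choose (j + 1) * (j + 1) := by
      exact_mod_cast Nat.add_one_mul_choose_eq (j + i + 1) j
    show ((j + i + 2).choose (j + 1) : ℝ) * abelCoeff μ ((j + 1) * μ) (i + 1)
      = (j + i + 1).choose j * (μ * ((j + i + 1 : ℕ) + 1)) ^ (i + 1)
    rw [abelCoeff]
    push_cast at h ⊢
    linear_combination -(μ * (μ * (j + i + 2)) ^ i) * h

theorem sum_choose_mul_pow_mul_abelCoeff (μ x : ℝ) (n : ℕ) :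
    ∑ j ∈ range (n + 1), (n.choose j : ℝ) * x ^ j * abelCoeff μ (j * μ) (n - j)
      = abelCoeff μ x n := by
  cases n with
  | zero => simp [abelCoeff]
  | succ n =>
    rw [sum_range_succ', abelCoeff, add_pow, mul_sum,
      show abelCoeff μ (((0 : ℕ) : ℝ) * μ) (n + 1 - 0) = 0 by simp [abelCoeff], mul_zero,
      add_zero]
    refine sum_congr rfl fun j hj => ?_
    have := choose_succ_mul_abelCoeff (μ := μ) (Nat.lt_succ_iff.1 (mem_range.1 hj))
    rw [Nat.add_sub_add_right]
    push_cast at this ⊢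
    linear_combination x ^ (j + 1) * this

-- Stirling's bound `K! ≥ √(2πK) (K/e)^K` makes the terms `O(K^(-3/2))`.
theorem summable_pow_mul_exp_neg_div_factorial :
    Summable fun k : ℕ => ((k + 1 : ℕ) : ℝ) ^ k * exp (-(k + 1 : ℕ)) / (k + 1)! := by
  have hp := (summable_nat_add_iff 1).mpr
    (Real.summable_one_div_nat_rpow.mpr (by norm_num : (1 : ℝ) < 3 / 2))
  refine hp.of_nonneg_of_le (fun k => by positivity) fun k => ?_
  set K : ℝ := ((k + 1 : ℕ) : ℝ)
  have hK : 0 < K := by positivity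
  have hstirling := Stirling.le_factorial_stirling (k + 1)
  have hsqrt : √K ≤ √(2 * π * K) := Real.sqrt_le_sqrt (by nlinarith [pi_gt_three])
  have hrpow : K ^ (3 / 2 : ℝ) = K * √K := by
    rw [show (3 / 2 : ℝ) = 1 + 1 / 2 by norm_num, rpow_add hK, rpow_one, sqrt_eq_rpow]
  have hpow : K ^ k * exp (-K) * (K * √K) = √K * (K / exp 1) ^ (k + 1) := by
    have hexp : exp K = exp 1 ^ (k + 1) := by rw [← exp_nat_mul, mul_one]
    rw [div_pow, exp_neg, hexp]
    field_simp
    ring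
  rw [hrpow, div_le_div_iff₀ (by positivity) (by positivity), one_mul, hpow]
  exact (mul_le_mul_of_nonneg_right hsqrt (by positivity)).trans hstirling

theorem add_pow_le_pow_mul_exp {a b : ℝ} (ha : 0 < a) (hb : 0 ≤ b) (k : ℕ) :
    (a + b) ^ k ≤ a ^ k * exp (k * b / a) := by
  have h : a + b ≤ a * exp (b / a) := by
    have := add_one_le_exp (b / a)
    rw [div_add_one ha.ne', div_le_iff₀ ha] at this
    linarith
  calc (a + b) ^ k ≤ (a * exp (b / a)) ^ k := pow_le_pow_left₀ (by positivity) h k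
    _ = a ^ k * exp (k * b / a) := by rw [mul_pow, ← exp_nat_mul, mul_div_assoc]

theorem abelCoeff_nonneg {μ x : ℝ} (hμ : 0 ≤ μ) (hx : 0 ≤ x) (k : ℕ) :
    0 ≤ abelCoeff μ x k := by
  cases k <;> simp only [abelCoeff] <;> positivity

theorem summable_abelCoeff_mul_pow_div_factorial {μ x z : ℝ} (hμ : 0 < μ) (hx : 0 ≤ x)
    (hz : 0 ≤ z) (hμz : μ * z ≤ exp (-1)) :
    Summable fun k => abelCoeff μ x k * z ^ k / k ! := by
  rw [← summable_nat_add_iff 1]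
  -- `(x + Kμ)^(K-1) ≤ e^(x/μ) (Kμ)^(K-1)` reduces the terms to the previous series.
  refine (summable_pow_mul_exp_neg_div_factorial.mul_left (x * exp (x / μ) / μ)).of_nonneg_of_le
    (fun k => by have := abelCoeff_nonneg hμ.le hx (k + 1); positivity) fun k => ?_
  set K : ℝ := ((k + 1 : ℕ) : ℝ)
  have hK : 0 < K := by positivity
  have hbase : (x + μ * K) ^ k ≤ (μ * K) ^ k * exp (x / μ) := by
    rw [add_comm]
    refine (add_pow_le_pow_mul_exp (by positivity) hx k).trans
      (mul_le_mul_of_nonneg_left (exp_le_exp.2 ?_) (by positivity))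
    rw [div_le_div_iff₀ (by positivity) hμ]
    have : (k : ℝ) ≤ K := by simp [K]
    nlinarith [mul_le_mul_of_nonneg_left this (mul_nonneg hx hμ.le)]
  have hzpow : z ^ (k + 1) ≤ (exp (-1) / μ) ^ (k + 1) :=
    pow_le_pow_left₀ hz ((le_div_iff₀' hμ).2 hμz) _
  calc abelCoeff μ x (k + 1) * z ^ (k + 1) / (k + 1)!
      ≤ x * ((μ * K) ^ k * exp (x / μ)) * (exp (-1) / μ) ^ (k + 1) / (k + 1)! := by
        rw [abelCoeff]
        gcongr
        exact_mod_cast hbase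
    _ = x * exp (x / μ) / μ * (K ^ k * exp (-K) / (k + 1)!) := by
        have hexp : exp (-K) = exp (-1) ^ (k + 1) := by rw [← exp_nat_mul]; simp [K]
        rw [hexp, div_pow]
        field_simp
        ring

theorem tsum_prod_eq_tsum_sum_antidiagonal {α : Type*} [AddCommMonoid α] [TopologicalSpace α]
    [ContinuousAdd α] [T3Space α] {F : ℕ × ℕ → α} (h : Summable F) :
    ∑' p, F p = ∑' n, ∑ p ∈ antidiagonal n, F p := by
  rw [← HasAntidiagonal.sigmaAntidiagonalEquivProd.tsum_eq F]
  exact ((HasAntidiagonal.sigmaAntidiagonalEquivProd.summable_iff.2 h).tsum_sigma'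
    fun n => (hasSum_fintype _).summable).trans (tsum_congr fun n => by
      rw [tsum_fintype]
      exact sum_coe_sort _ _)

theorem tsum_prod_mul_pow_div_factorial {a : ℕ → ℕ → ℝ} {z : ℝ}
    (h : Summable fun p : ℕ × ℕ => a p.1 p.2 * (z ^ p.1 / p.1 ! * (z ^ p.2 / p.2 !))) :
    ∑' p : ℕ × ℕ, a p.1 p.2 * (z ^ p.1 / p.1 ! * (z ^ p.2 / p.2 !))
      = ∑' n, (∑ j ∈ range (n + 1), n.choose j * a j (n - j)) * z ^ n / n ! := by
  rw [tsum_prod_eq_tsum_sum_antidiagonal h]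
  refine tsum_congr fun n => ?_
  rw [Nat.sum_antidiagonal_eq_sum_range_succ (fun i j => a i j * (z ^ i / i ! * (z ^ j / j !))),
    sum_mul, sum_div]
  refine sum_congr rfl fun j hj => ?_
  have hj : j ≤ n := Nat.lt_succ_iff.1 (mem_range.1 hj)
  rw [Nat.cast_choose ℝ hj, show z ^ n = z ^ j * z ^ (n - j) by
    rw [← pow_add, Nat.add_sub_cancel' hj]]
  field_simp

noncomputable def abelSeries (μ x z : ℝ) : ℝ := ∑' k, abelCoeff μ x k * z ^ k / k !

theorem abelSeries_zero (μ z : ℝ) : abelSeries μ 0 z = 1 := by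
  rw [abelSeries, tsum_eq_single 0 fun k hk => ?_]
  · simp [abelCoeff]
  · obtain ⟨k, rfl⟩ := Nat.exists_eq_succ_of_ne_zero hk
    simp [abelCoeff]

theorem abelSeries_add {μ x y z : ℝ} (hμ : 0 < μ) (hx : 0 ≤ x) (hy : 0 ≤ y) (hz : 0 ≤ z)
    (hμz : μ * z ≤ exp (-1)) :
    abelSeries μ (x + y) z = abelSeries μ x z * abelSeries μ y z := by
  have hsx := summable_abelCoeff_mul_pow_div_factorial hμ hx hz hμz
  have hsy := summable_abelCoeff_mul_pow_div_factorial hμ hy hz hμz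
  have hprod : Summable fun p : ℕ × ℕ =>
      abelCoeff μ x p.1 * z ^ p.1 / p.1 ! * (abelCoeff μ y p.2 * z ^ p.2 / p.2 !) :=
    hsx.mul_of_nonneg hsy (fun k => by have := abelCoeff_nonneg hμ.le hx k; positivity)
      fun k => by have := abelCoeff_nonneg hμ.le hy k; positivity
  have hterm : ∀ p : ℕ × ℕ,
      abelCoeff μ x p.1 * z ^ p.1 / p.1 ! * (abelCoeff μ y p.2 * z ^ p.2 / p.2 !)
        = abelCoeff μ x p.1 * abelCoeff μ y p.2 * (z ^ p.1 / p.1 ! * (z ^ p.2 / p.2 !)) :=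
    fun p => by ring
  rw [abelSeries, abelSeries, abelSeries, hsx.tsum_mul_tsum hsy hprod, tsum_congr hterm,
    tsum_prod_mul_pow_div_factorial (a := fun i j => abelCoeff μ x i * abelCoeff μ y j)
    ((summable_congr hterm).1 hprod)]
  simp only [← mul_assoc, sum_choose_mul_abelCoeff_mul_abelCoeff]

theorem abelSeries_nat_mul {μ x z : ℝ} (hμ : 0 < μ) (hx : 0 ≤ x) (hz : 0 ≤ z)
    (hμz : μ * z ≤ exp (-1)) (n : ℕ) : abelSeries μ (n * x) z = abelSeries μ x z ^ n := by
  induction n with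
  | zero => simp [abelSeries_zero]
  | succ n ih =>
    rw [Nat.cast_succ, add_mul, one_mul, abelSeries_add hμ (by positivity) hx hz hμz, ih,
      pow_succ]

theorem exp_mul_abelSeries {μ x z : ℝ} (hμ : 0 < μ) (hx : 0 ≤ x) (hz : 0 ≤ z)
    (hμz : μ * z ≤ exp (-1)) : exp (x * z * abelSeries μ μ z) = abelSeries μ x z := by
  have hrow : ∀ j : ℕ,
      HasSum (fun k => x ^ j * abelCoeff μ (j * μ) k * (z ^ j / j ! * (z ^ k / k !)))
        ((x * z * abelSeries μ μ z) ^ j / j !) := fun j => by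
    have h : HasSum (fun k => (x * z) ^ j / j ! * (abelCoeff μ (j * μ) k * z ^ k / k !))
        ((x * z) ^ j / j ! * abelSeries μ (j * μ) z) :=
      (summable_abelCoeff_mul_pow_div_factorial hμ (by positivity) hz hμz).hasSum.mul_left _
    rw [abelSeries_nat_mul hμ hμ.le hz hμz, div_mul_eq_mul_div, ← mul_pow] at h
    exact h.congr_fun fun k => by ring
  have hsum : Summable fun p : ℕ × ℕ =>
      x ^ p.1 * abelCoeff μ (p.1 * μ) p.2 * (z ^ p.1 / p.1 ! * (z ^ p.2 / p.2 !)) := by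
    refine (summable_prod_of_nonneg fun p => ?_).2 ⟨fun j => (hrow j).summable, ?_⟩
    · have := abelCoeff_nonneg hμ.le (by positivity : 0 ≤ (p.1 : ℝ) * μ) p.2
      simp only [Pi.zero_apply]
      positivity
    · simpa only [(hrow _).tsum_eq] using
        Real.summable_pow_div_factorial (x * z * abelSeries μ μ z)
  have hexp : exp (x * z * abelSeries μ μ z) = ∑' j, (x * z * abelSeries μ μ z) ^ j / j ! := by
    rw [Real.exp_eq_exp_ℝ, NormedSpace.exp_eq_tsum_div]
  rw [hexp, ← tsum_congr fun j => (hrow j).tsum_eq,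
    ← hsum.tsum_prod' fun j => (hrow j).summable,
    tsum_prod_mul_pow_div_factorial (a := fun j k => x ^ j * abelCoeff μ (j * μ) k) hsum,
    abelSeries]
  simp only [← mul_assoc, sum_choose_mul_pow_mul_abelCoeff]

theorem abelCoeff_one (μ : ℝ) (k : ℕ) : abelCoeff μ 1 k = (k * μ + 1) ^ (k - 1) := by
  cases k with
  | zero => simp [abelCoeff]
  | succ k => rw [abelCoeff, Nat.add_sub_cancel]; push_cast; ring_nf

theorem f_eq_exp_mul_abelSeries {μ : ℝ} (hμ : μ ≠ 0) (c : ℝ) :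
    f μ c = exp (-(c / μ)) * abelSeries μ 1 (c / μ * exp (-c)) := by
  rw [f, abelSeries, ← tsum_mul_left]
  refine tsum_congr fun k => ?_
  have hexp : exp (-c * (k * μ + 1) / μ) = exp (-(c / μ)) * exp (-c) ^ k := by
    rw [← exp_nat_mul, ← exp_add]
    congr 1
    field_simp
    ring
  rw [abelCoeff_one, hexp, mul_pow, div_pow]
  field_simp

theorem f_functional_equation (m : ℕ) (hm : 0 < m) (c : ℝ) (hc : 0 < c) :
    f (m : ℝ) c = Real.exp (-c * (1 - f (m : ℝ) c ^ m) / m) ∧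
      f (m : ℝ) c ^ m = Real.exp (-c * (1 - f (m : ℝ) c ^ m)) := by
  have hμ : (0 : ℝ) < m := Nat.cast_pos.2 hm
  set t := c / m
  have hct : (m : ℝ) * t = c := mul_div_cancel₀ c hμ.ne'
  set z := t * exp (-c) with hz_def
  have hz : 0 ≤ z := by positivity
  have hμz : (m : ℝ) * z ≤ exp (-1) := by
    rw [← mul_assoc, hct]
    exact mul_exp_neg_le_exp_neg_one c
  have hf : f m c = exp (-t) * abelSeries m 1 z := f_eq_exp_mul_abelSeries hμ.ne' c
  have hfm : f m c ^ m = exp (-c) * abelSeries m m z := by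
    rw [hf, mul_pow, ← abelSeries_nat_mul hμ zero_le_one hz hμz, ← exp_nat_mul, mul_one, mul_neg,
      hct]
  have hkey : exp (t * f m c ^ m) = exp t * f m c :=
    calc exp (t * f m c ^ m) = exp (1 * z * abelSeries m m z) := by
          rw [hfm, hz_def, one_mul, mul_assoc]
      _ = abelSeries m 1 z := exp_mul_abelSeries hμ zero_le_one hz hμz
      _ = exp t * f m c := by rw [hf, ← mul_assoc, ← exp_add, add_neg_cancel, exp_zero, one_mul]
  have hfix : f m c = exp (-c * (1 - f m c ^ m) / m) := by
    rw [show -c * (1 - f m c ^ m) / m = t * f m c ^ m + -t by rw [← hct]; field_simp; ring,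
      exp_add, hkey, mul_comm (exp t), mul_assoc, ← exp_add, add_neg_cancel, exp_zero, mul_one]
  refine ⟨hfix, ?_⟩
  conv_lhs => rw [hfix]
  rw [← exp_nat_mul]
  field_simp
end
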